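/- Let n ≥ 2 and m > n. For every profile of nonnegative additive valuations (v_1,…,v_n) over the m goods, there exists an allocation X = (X_1,…,X_n) such that each agent i ∈ {1,…,n−1} receives exactly one good, agent n receives the remaining m−n+1 goods, for every i ∈ {1,…,n−1} and every g ∈ X_n it holds that v_i(X_i) ≥ v_i(g), and X is a (1/(m−n))-EFX allocation. (This is the allocation produced by the RoundRobin-up-to-the-LastAgent algorithm.) -/
import Mathlib

lemma greedy (n m : ℕ) (hm0 : 0 < m) (hnm : n ≤ m) (v : Fin n → Fin m → ℝ) :
    ∀ k, k ≤ n → ∃ a : ℕ → Fin m,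
      (∀ i j, i < k → j < k → a i = a j → i = j) ∧
      (∀ i (hik : i < k) (hin : i < n) (g : Fin m), (∀ j, j < i → g ≠ a j) →
        v ⟨i, hin⟩ g ≤ v ⟨i, hin⟩ (a i)) := by
  intro k
  induction k with
  | zero => intro _; exact ⟨fun _ => ⟨0, hm0⟩, by omega, by omega⟩
  | succ k ih =>
    intro hk
    obtain ⟨a, hinj, hmax⟩ := ih (by omega)
    have hcard : ((Finset.range k).image a).card ≤ k :=
      (Finset.card_image_le).trans (by simp)
    have hkm : k < m := by omega
    have hTne : (Finset.univ \ (Finset.range k).image a : Finset (Fin m)).Nonempty := by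
      rw [← Finset.card_pos, Finset.card_sdiff_of_subset (Finset.subset_univ _)]
      simp only [Finset.card_univ, Fintype.card_fin]
      omega
    obtain ⟨b, hbT, hbmax⟩ :=
      (Finset.univ \ (Finset.range k).image a).exists_max_image (v ⟨k, by omega⟩) hTne
    have hbnot : ∀ j, j < k → b ≠ a j := by
      intro j hj hbj
      rw [Finset.mem_sdiff] at hbT
      exact hbT.2 (Finset.mem_image.2 ⟨j, Finset.mem_range.2 hj, hbj.symm⟩)
    refine ⟨fun j => if j = k then b else a j, ?_, ?_⟩
    · intro i j hi hj hij
      simp only at hij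
      by_cases hik : i = k <;> by_cases hjk : j = k
      · omega
      · rw [if_pos hik, if_neg hjk] at hij
        exact absurd hij (hbnot j (by omega))
      · rw [if_neg hik, if_pos hjk] at hij
        exact absurd hij.symm (hbnot i (by omega))
      · rw [if_neg hik, if_neg hjk] at hij
        exact hinj i j (by omega) (by omega) hij
    · intro i hik hin g hg
      by_cases hi : i = k
      · subst hi
        simp only [if_pos rfl]
        have hgT : g ∈ Finset.univ \ (Finset.range i).image a := by
          rw [Finset.mem_sdiff]
          refine ⟨Finset.mem_univ _, fun hmem => ?_⟩
          obtain ⟨j, hj, hjg⟩ := Finset.mem_image.1 hmem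
          have hjlt := Finset.mem_range.1 hj
          have := hg j hjlt
          simp only [if_neg (show j ≠ i by omega)] at this
          exact this hjg.symm
        exact hbmax g hgT
      · have hik' : i < k := by omega
        simp only [if_neg hi]
        refine hmax i hik' hin g (fun j hj => ?_)
        have := hg j hj
        simpa only [if_neg (show j ≠ k by omega)] using this

/-- The RoundRobin-up-to-the-LastAgent algorithm: for every profile of
nonnegative additive valuations there is an allocation in which each of the first `n-1`
agents gets exactly one good, agent `n` gets the remaining `m-n+1` goods, each of the
first `n-1` agents values her good at least as much as any good of agent `n`, and the
allocation is `1/(m-n)`-EFX. -/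
theorem stmt_1 (n m : ℕ) (hn : 2 ≤ n) (hm : n < m)
    (v : Fin n → Fin m → ℝ) (hv : ∀ i g, 0 ≤ v i g) :
    ∃ X : Fin n → Finset (Fin m),
      (∀ i j : Fin n, i ≠ j → Disjoint (X i) (X j)) ∧
      (∀ g : Fin m, ∃ i : Fin n, g ∈ X i) ∧
      (∀ i : Fin n, (i : ℕ) < n - 1 → (X i).card = 1) ∧
      (X ⟨n - 1, by omega⟩).card = m - n + 1 ∧
      (∀ i : Fin n, (i : ℕ) < n - 1 →
        ∀ g ∈ X ⟨n - 1, by omega⟩, v i g ≤ (X i).sum (v i)) ∧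
      (∀ i j : Fin n, X j ≠ ∅ → ∀ g ∈ X j,
        (1 / ((m : ℝ) - (n : ℝ))) * ((X j).erase g).sum (v i) ≤ (X i).sum (v i)) := by
  obtain ⟨a, hinj, hmax⟩ := greedy n m (by omega) (by omega) v (n - 1) (by omega)
  set picked : Finset (Fin m) := (Finset.range (n - 1)).image a with hpicked
  set R : Finset (Fin m) := Finset.univ \ picked with hR
  set X : Fin n → Finset (Fin m) :=
    fun i => if (i : ℕ) < n - 1 then {a i} else R with hX
  have hXlt : ∀ i : Fin n, (i : ℕ) < n - 1 → X i = {a i} := by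
    intro i hi; simp [hX, hi]
  have hXlast : X ⟨n - 1, by omega⟩ = R := by simp [hX]
  have hmemp : ∀ j, j < n - 1 → a j ∈ picked := fun j hj =>
    Finset.mem_image.2 ⟨j, Finset.mem_range.2 hj, rfl⟩
  have hRnot : ∀ g ∈ R, ∀ j, j < n - 1 → g ≠ a j := by
    intro g hg j hj hgj
    rw [hR, Finset.mem_sdiff] at hg
    exact hg.2 (hgj ▸ hmemp j hj)
  have hcardp : picked.card = n - 1 := by
    rw [hpicked, Finset.card_image_of_injOn, Finset.card_range]
    intro i hi j hj hij
    exact hinj i j (Finset.mem_range.1 hi) (Finset.mem_range.1 hj) hij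
  have hcardR : R.card = m - n + 1 := by
    rw [hR, Finset.card_sdiff_of_subset (Finset.subset_univ _), hcardp]
    simp only [Finset.card_univ, Fintype.card_fin]
    omega
  -- the key domination property
  have hdom : ∀ i : Fin n, (i : ℕ) < n - 1 → ∀ g ∈ R, v i g ≤ v i (a i) := by
    intro i hi g hg
    have := hmax i.1 hi i.2 g (fun j hj => hRnot g hg j (by omega))
    simpa using this
  have hsumnn : ∀ (i : Fin n) (s : Finset (Fin m)), 0 ≤ s.sum (v i) :=
    fun i s => Finset.sum_nonneg fun g _ => hv i g
  have hcast : ((m : ℝ) - (n : ℝ)) = ((m - n : ℕ) : ℝ) := by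
    rw [Nat.cast_sub (le_of_lt hm)]
  have hc : (0 : ℝ) < (m : ℝ) - (n : ℝ) := by
    have : (n : ℝ) < m := by exact_mod_cast hm
    linarith
  have hc1 : (1 : ℝ) ≤ (m : ℝ) - (n : ℝ) := by
    have : ((n : ℝ) + 1) ≤ m := by exact_mod_cast hm
    linarith
  refine ⟨X, ?_, ?_, ?_, ?_, ?_, ?_⟩
  · -- disjointness
    intro i j hij
    by_cases hi : (i : ℕ) < n - 1 <;> by_cases hj : (j : ℕ) < n - 1
    · rw [hXlt i hi, hXlt j hj, Finset.disjoint_singleton]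
      intro h
      exact hij (Fin.ext (hinj i.1 j.1 hi hj h))
    · have hXj : X j = R := by simp [hX, hj]
      rw [hXlt i hi, hXj, Finset.disjoint_singleton_left]
      intro h
      exact (hRnot _ h i.1 hi) rfl
    · have hXi : X i = R := by simp [hX, hi]
      rw [hXi, hXlt j hj, Finset.disjoint_singleton_right]
      intro h
      exact (hRnot _ h j.1 hj) rfl
    · exact absurd (Fin.ext (by omega : i.1 = j.1)) hij
  · -- covering
    intro g
    by_cases hg : g ∈ picked
    · obtain ⟨j, hj, hjg⟩ := Finset.mem_image.1 hg
      have hjlt := Finset.mem_range.1 hj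
      refine ⟨⟨j, by omega⟩, ?_⟩
      rw [hXlt ⟨j, by omega⟩ (by simpa using hjlt)]
      simp [hjg]
    · refine ⟨⟨n - 1, by omega⟩, ?_⟩
      rw [hXlast, hR, Finset.mem_sdiff]
      exact ⟨Finset.mem_univ _, hg⟩
  · -- singletons
    intro i hi
    rw [hXlt i hi, Finset.card_singleton]
  · -- last agent's card
    rw [hXlast, hcardR]
  · -- domination
    intro i hi g hg
    rw [hXlast] at hg
    rw [hXlt i hi, Finset.sum_singleton]
    exact hdom i hi g hg
  · -- EFX
    intro i j hjne g hgj
    by_cases hj : (j : ℕ) < n - 1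
    · rw [hXlt j hj] at hgj ⊢
      rw [Finset.mem_singleton] at hgj
      subst hgj
      rw [Finset.erase_singleton, Finset.sum_empty, mul_zero]
      exact hsumnn i (X i)
    · have hXj : X j = R := by simp [hX, hj]
      rw [hXj] at hgj ⊢
      by_cases hi : (i : ℕ) < n - 1
      · rw [hXlt i hi, Finset.sum_singleton]
        have hle : (R.erase g).sum (v i) ≤ (R.erase g).card • v i (a i) :=
          Finset.sum_le_card_nsmul _ _ _
            (fun g' hg' => hdom i hi g' (Finset.erase_subset _ _ hg'))
        have hcarde : (R.erase g).card = m - n := by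
          rw [Finset.card_erase_of_mem hgj, hcardR]
          omega
        rw [hcarde, nsmul_eq_mul] at hle
        rw [one_div_mul_eq_div, div_le_iff₀ hc]
        calc (R.erase g).sum (v i) ≤ (m - n : ℕ) * v i (a i) := hle
          _ = v i (a i) * ((m : ℝ) - (n : ℝ)) := by rw [hcast]; ring
      · have hXi : X i = R := by simp [hX, hi]
        rw [hXi]
        have h1 : (R.erase g).sum (v i) ≤ R.sum (v i) :=
          Finset.sum_le_sum_of_subset_of_nonneg (Finset.erase_subset _ _)
            (fun g' _ _ => hv i g')
        have h2 : (1 / ((m : ℝ) - (n : ℝ))) * (R.erase g).sum (v i)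
            ≤ 1 * (R.erase g).sum (v i) := by
          apply mul_le_mul_of_nonneg_right _ (hsumnn i _)
          rw [div_le_one hc]
          exact hc1
        rw [one_mul] at h2
        exact h2.trans h1
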